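/- arXiv:2102.01251 — 2 statements merged into one kernel-verified Lean document; each statement's English description precedes it below -/
import Mathlib

section
/- Consider a process on a finite simple graph with k vertices where edges are initially inactive and, in rounds, each connected component of the active-edge subgraph having an edge to another component activates one such edge (and some active edges may be deleted at the end of a round). Then at every round, the number of active edges is at most 2k - 2. -/
open SimpleGraph

variable {V : Type*}

-- acyclic is antitone
lemma isAcyclic_anti {G G' : SimpleGraph V} (h : G ≤ G') (h' : G'.IsAcyclic) : G.IsAcyclic := by
  intro v c hc
  exact h' (c.mapLe h) (hc.mapLe h)

-- adding an edge between unreachable vertices preserves acyclicity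
lemma isAcyclic_sup_edge {G : SimpleGraph V} (hG : G.IsAcyclic) {u v : V} (huv : u ≠ v)
    (hnr : ¬ G.Reachable u v) : (G ⊔ edge u v).IsAcyclic := by
  classical
  have hadj : ¬ G.Adj u v := fun h => hnr h.reachable
  have hdel : (G ⊔ edge u v) \ fromEdgeSet {s(u, v)} = G := by
    ext x y
    simp only [sdiff_adj, sup_adj, edge_adj, fromEdgeSet_adj, Set.mem_singleton_iff]
    constructor
    · rintro ⟨h1 | h2, h3⟩
      · exact h1
      · exfalso; rcases h2.1 with ⟨rfl, rfl⟩ | ⟨rfl, rfl⟩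
        · exact h3 ⟨rfl, h2.2⟩
        · exact h3 ⟨Sym2.eq_swap, h2.2⟩
    · intro h
      refine ⟨Or.inl h, ?_⟩
      rintro ⟨he, -⟩
      rw [Sym2.eq_iff] at he
      rcases he with ⟨rfl, rfl⟩ | ⟨rfl, rfl⟩
      · exact hadj h
      · exact hadj h.symm
  intro a w hw
  by_cases hm : s(u, v) ∈ w.edges
  · have : (G ⊔ edge u v).Adj u v ∧ ((G ⊔ edge u v) \ fromEdgeSet {s(u, v)}).Reachable u v :=
      adj_and_reachable_delete_edges_iff_exists_cycle.2 ⟨a, w, hw, hm⟩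
    rw [hdel] at this
    exact hnr this.2
  · have hsub : ∀ e ∈ w.edges, e ∈ G.edgeSet := by
      intro e he
      have := w.edges_subset_edgeSet he
      rw [edgeSet_sup, edge_edgeSet_of_ne huv] at this
      rcases this with h | h
      · exact h
      · rw [Set.mem_singleton_iff] at h; subst h; exact absurd he hm
    exact hG (w.transfer G hsub) (hw.transfer hsub)

-- forests have at most card V - 1 edges
lemma ncard_edgeSet_eq_card_edgeFinset (G : SimpleGraph V) [Fintype G.edgeSet] :
    G.edgeSet.ncard = G.edgeFinset.card := Set.ncard_eq_toFinset_card' _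

lemma ncard_edgeSet_sup_edge [Fintype V] (G : SimpleGraph V) {x y : V} (hadj : ¬ G.Adj x y)
    (hne : x ≠ y) : (G ⊔ edge x y).edgeSet.ncard = G.edgeSet.ncard + 1 := by
  rw [edgeSet_sup, edge_edgeSet_of_ne hne, Set.union_singleton,
    Set.ncard_insert_of_notMem (by rwa [mem_edgeSet]) (Set.toFinite _)]

lemma isAcyclic_ncard_aux [Fintype V] [Nonempty V] :
    ∀ (n : ℕ) (G : SimpleGraph V),
      (Fintype.card V).choose 2 ≤ G.edgeSet.ncard + n → G.IsAcyclic →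
      G.edgeSet.ncard + 1 ≤ Fintype.card V := by
  intro n
  induction n with
  | zero =>
    intro G hn hG
    classical
    by_cases hc : G.Connected
    · rw [ncard_edgeSet_eq_card_edgeFinset]
      exact le_of_eq (IsTree.card_edgeFinset ⟨hc, hG⟩)
    · exfalso
      have hpre : ¬ G.Preconnected := fun h => hc ⟨h⟩
      rw [Preconnected] at hpre
      push_neg at hpre
      obtain ⟨x, y, hxy⟩ := hpre
      have hne : x ≠ y := fun h => hxy (h ▸ Reachable.refl x)
      have h1 : (G ⊔ edge x y).edgeSet.ncard = G.edgeSet.ncard + 1 :=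
        ncard_edgeSet_sup_edge G (fun h => hxy h.reachable) hne
      have h2 : (G ⊔ edge x y).edgeSet.ncard ≤ (Fintype.card V).choose 2 := by
        rw [ncard_edgeSet_eq_card_edgeFinset]
        exact card_edgeFinset_le_card_choose_two
      omega
  | succ n ih =>
    intro G hn hG
    classical
    by_cases hc : G.Connected
    · rw [ncard_edgeSet_eq_card_edgeFinset]
      exact le_of_eq (IsTree.card_edgeFinset ⟨hc, hG⟩)
    · have hpre : ¬ G.Preconnected := fun h => hc ⟨h⟩
      rw [Preconnected] at hpre
      push_neg at hpre
      obtain ⟨x, y, hxy⟩ := hpre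
      have hne : x ≠ y := fun h => hxy (h ▸ Reachable.refl x)
      have hacyc' := isAcyclic_sup_edge hG hne hxy
      have hcard : (G ⊔ edge x y).edgeSet.ncard = G.edgeSet.ncard + 1 :=
        ncard_edgeSet_sup_edge G (fun h => hxy h.reachable) hne
      have := ih (G ⊔ edge x y) (by omega) hacyc'
      omega

lemma isAcyclic_ncard_le [Fintype V] [Nonempty V] (G : SimpleGraph V)
    (hG : G.IsAcyclic) : G.edgeSet.ncard + 1 ≤ Fintype.card V :=
  isAcyclic_ncard_aux ((Fintype.card V).choose 2) G (by omega) hG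



section Dyn

variable {X : Type*}

/-- `c` is a periodic point of `f`. -/
def IsPer (f : X → X) (c : X) : Prop := ∃ p, 0 < p ∧ f^[p] c = c

/-- `c` is periodic and minimal on its orbit. -/
def IsSpec [LinearOrder X] (f : X → X) (c : X) : Prop := IsPer f c ∧ ∀ n, c ≤ f^[n] c

lemma isPer_iterate {f : X → X} {c : X} (h : IsPer f c) (n : ℕ) : IsPer f (f^[n] c) := by
  obtain ⟨p, hp, hpc⟩ := h
  refine ⟨p, hp, ?_⟩
  rw [← Function.iterate_add_apply, Nat.add_comm, Function.iterate_add_apply, hpc]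

lemma iterate_mult {f : X → X} {c : X} {p : ℕ} (h : f^[p] c = c) :
    ∀ q, f^[p * q] c = c := by
  intro q
  induction q with
  | zero => simp
  | succ q ih =>
    rw [Nat.mul_succ, Function.iterate_add_apply, h, ih]

lemma iterate_mod {f : X → X} {c : X} {p : ℕ} (hp : 0 < p) (h : f^[p] c = c) (a : ℕ) :
    f^[a] c = f^[a % p] c := by
  conv_lhs => rw [← Nat.mod_add_div a p, Function.iterate_add_apply, iterate_mult h _]

lemma iterate_pred_succ {f : X → X} {c : X} {n : ℕ} (hn : 0 < n) :
    f^[n - 1] (f c) = f^[n] c := by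
  rw [← Function.iterate_succ_apply]
  congr 1
  omega

lemma isPer_pred_unique {f : X → X} {c c' : X} (hc : IsPer f c) (hc' : IsPer f c')
    (h : f c = f c') : c = c' := by
  obtain ⟨p, hp, hpc⟩ := hc
  obtain ⟨q, hq, hqc⟩ := hc'
  have hpos : 0 < p * q := Nat.mul_pos hp hq
  have h1 : c = f^[p * q - 1] (f c) := by
    rw [iterate_pred_succ hpos]
    exact (iterate_mult hpc q).symm
  have h2 : c' = f^[p * q - 1] (f c') := by
    rw [iterate_pred_succ hpos, Nat.mul_comm]
    exact (iterate_mult hqc p).symm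
  rw [h1, h2, h]

lemma exists_iterate_isPer [Finite X] (f : X → X) (c : X) : ∃ n, IsPer f (f^[n] c) := by
  obtain ⟨a, b, hab, heq⟩ := Finite.exists_ne_map_eq_of_infinite (fun n : ℕ => f^[n] c)
  rcases Nat.lt_or_ge a b with h | h
  · exact ⟨a, b - a, by omega, by
      rw [← Function.iterate_add_apply]
      simpa [Nat.sub_add_cancel h.le] using heq.symm⟩
  · have h' : b < a := lt_of_le_of_ne h (Ne.symm hab)
    exact ⟨b, a - b, by omega, by
      rw [← Function.iterate_add_apply]
      simpa [Nat.sub_add_cancel h'.le] using heq⟩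

lemma exists_iterate_isSpec [LinearOrder X] {f : X → X} {c : X} (hc : IsPer f c) :
    ∃ n, IsSpec f (f^[n] c) := by
  obtain ⟨p, hp, hpc⟩ := hc
  obtain ⟨j, hj, hmin⟩ := Finset.exists_min_image (Finset.range p) (fun i => f^[i] c)
    ⟨0, Finset.mem_range.2 hp⟩
  refine ⟨j, isPer_iterate ⟨p, hp, hpc⟩ j, ?_⟩
  intro m
  rw [← Function.iterate_add_apply, iterate_mod hp hpc (m + j)]
  exact hmin _ (Finset.mem_range.2 (Nat.mod_lt _ hp))

lemma selM [LinearOrder X] (f : X → X) (T : Set X)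
    (hT : ∀ c ∈ T, IsSpec f c) (hne : T.Nonempty) :
    ∃ c' ∈ T, ∀ c ∈ T, c ≠ c' → c ≠ c' ∧ f c ≠ c' := by
  obtain ⟨c', hc'⟩ := hne
  refine ⟨c', hc', fun c hc hnec => ⟨hnec, fun hfc => hnec ?_⟩⟩
  obtain ⟨p, hp, hpc⟩ := (hT c hc).1
  have h1 : c = f^[p - 1] (f c) := by
    rw [iterate_pred_succ hp]
    exact hpc.symm
  have h2 : c' ≤ c := by
    rw [h1, hfc]
    exact (hT c' hc').2 (p - 1)
  have h3 : c ≤ c' := by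
    have := (hT c hc).2 1
    simpa [hfc] using this
  exact le_antisymm h3 h2

lemma selF [Finite X] [LinearOrder X] (f : X → X) (T : Set X)
    (hT : ∀ c ∈ T, ¬ IsSpec f c) (hne : T.Nonempty) :
    ∃ c' ∈ T, (∀ c ∈ T, c ≠ c' → c ≠ c' ∧ f c ≠ c') ∨
      (∀ c ∈ T, c ≠ c' → c ≠ f c' ∧ f c ≠ f c') := by
  classical
  by_cases hall : ∀ c ∈ T, IsPer f c
  · -- all periodic: minimize distance to the special point of the orbit
    set g : X → ℕ := fun c => if h : ∃ n, IsSpec f (f^[n] c) then Nat.find h else 0 with hg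
    obtain ⟨c', hc', hmin⟩ := Set.exists_min_image T g (Set.toFinite T) hne
    have hex : ∀ c : X, IsPer f c → ∃ n, IsSpec f (f^[n] c) := fun c hc =>
      exists_iterate_isSpec hc
    have hgspec : ∀ c : X, IsPer f c → IsSpec f (f^[g c] c) := by
      intro c hc
      have h := hex c hc
      rw [hg]
      simp only [dif_pos h]
      exact Nat.find_spec h
    have hgpos : ∀ c ∈ T, 0 < g c := by
      intro c hc
      rcases Nat.eq_zero_or_pos (g c) with h | h
      · exfalso
        have := hgspec c (hall c hc)
        rw [h] at this
        exact hT c hc this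
      · exact h
    have hgshift : ∀ c ∈ T, g (f c) ≤ g c - 1 := by
      intro c hc
      have hPfc : IsPer f (f c) := isPer_iterate (hall c hc) 1
      have hs : IsSpec f (f^[g c - 1] (f c)) := by
        rw [iterate_pred_succ (hgpos c hc)]
        exact hgspec c (hall c hc)
      have hexfc := hex _ hPfc
      rw [hg]
      simp only [dif_pos hexfc]
      exact Nat.find_le hs
    refine ⟨c', hc', Or.inr fun c hc hnec => ⟨?_, ?_⟩⟩
    · intro hcf
      have h1 : g c ≤ g c' - 1 := hcf ▸ hgshift c' hc'
      have h2 : g c' ≤ g c := hmin c hc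
      have := hgpos c' hc'
      omega
    · intro hff
      exact hnec (isPer_pred_unique (hall c hc) (hall c' hc') hff)
  · -- some non-periodic point: maximize distance to the periodic part
    push_neg at hall
    obtain ⟨c₀, hc₀, hc₀p⟩ := hall
    set g : X → ℕ := fun c => Nat.find (exists_iterate_isPer f c) with hg
    obtain ⟨c', hc', hmax⟩ := Set.exists_max_image T g (Set.toFinite T) hne
    have hgspec : ∀ c : X, IsPer f (f^[g c] c) := fun c => Nat.find_spec (exists_iterate_isPer f c)
    have hgzero : ∀ c : X, IsPer f c → g c = 0 := by
      intro c hc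
      rw [hg]
      exact Nat.eq_zero_of_le_zero (Nat.find_le (by simpa using hc))
    have hc'np : ¬ IsPer f c' := by
      intro h
      have h1 : g c₀ ≤ g c' := hmax c₀ hc₀
      have h2 : g c' = 0 := hgzero c' h
      rw [h2, Nat.le_zero] at h1
      have := hgspec c₀
      rw [h1] at this
      exact hc₀p this
    refine ⟨c', hc', Or.inl fun c hc hnec => ⟨hnec, ?_⟩⟩
    intro hfc
    by_cases hPc : IsPer f c
    · exact hc'np (hfc ▸ isPer_iterate hPc 1)
    · have hgc : 0 < g c := by
        rcases Nat.eq_zero_or_pos (g c) with h | h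
        · exfalso; have := hgspec c; rw [h] at this; exact hPc this
        · exact h
      have hshift : g (f c) ≤ g c - 1 := by
        have hs : IsPer f (f^[g c - 1] (f c)) := by
          rw [iterate_pred_succ hgc]
          exact hgspec c
        exact Nat.find_le hs
      rw [hfc] at hshift
      have := hmax c hc
      omega

end Dyn






section Proj

variable {A B : Set (Sym2 V)}

/-- Reachability in `B` plus a family of chosen inter-component edges projects to the
reflexive-transitive closure of the corresponding steps on components of `A`. -/
lemma reachable_proj (hBA : B ⊆ A)
    (next : (fromEdgeSet A).ConnectedComponent → (fromEdgeSet A).ConnectedComponent)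
    (uu vv : (fromEdgeSet A).ConnectedComponent → V)
    (T : Set (fromEdgeSet A).ConnectedComponent)
    (hu : ∀ c ∈ T, (fromEdgeSet A).connectedComponentMk (uu c) = c)
    (hv : ∀ c ∈ T, (fromEdgeSet A).connectedComponentMk (vv c) = next c)
    {x y : V}
    (h : (fromEdgeSet (B ∪ (fun c => s(uu c, vv c)) '' T)).Reachable x y) :
    Relation.ReflTransGen
      (fun a b => ∃ c ∈ T, (a = c ∧ b = next c) ∨ (b = c ∧ a = next c))
      ((fromEdgeSet A).connectedComponentMk x) ((fromEdgeSet A).connectedComponentMk y) := by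
  obtain ⟨w⟩ := h
  induction w with
  | nil => exact Relation.ReflTransGen.refl
  | @cons x z y hadj w ih =>
    rw [fromEdgeSet_adj] at hadj
    obtain ⟨hmem, hne⟩ := hadj
    rcases hmem with hB | ⟨c, hcT, heq⟩
    · have : (fromEdgeSet A).connectedComponentMk x = (fromEdgeSet A).connectedComponentMk z :=
        ConnectedComponent.connectedComponentMk_eq_of_adj (by rw [fromEdgeSet_adj]; exact ⟨hBA hB, hne⟩)
      rw [this]
      exact ih
    · rw [Sym2.eq_iff] at heq
      refine Relation.ReflTransGen.head ⟨c, hcT, ?_⟩ ih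
      rcases heq with ⟨hxe, hze⟩ | ⟨hxe, hze⟩
      · left; exact ⟨hxe ▸ hu c hcT, hze ▸ hv c hcT⟩
      · right; exact ⟨hxe ▸ hu c hcT, hze ▸ hv c hcT⟩

end Proj

/-- From an untouched vertex, the closure reaches nothing else. -/
lemma rtg_eq_of_untouched {K : Type*} {next : K → K} {T : Set K} {x y : K}
    (hx : ∀ c ∈ T, c ≠ x ∧ next c ≠ x)
    (h : Relation.ReflTransGen
      (fun a b => ∃ c ∈ T, (a = c ∧ b = next c) ∨ (b = c ∧ a = next c)) x y) :
    y = x := by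
  rcases h.cases_head with h | ⟨z, ⟨c, hcT, hstep⟩, -⟩
  · exact h.symm
  · exfalso
    rcases hstep with ⟨h1, -⟩ | ⟨-, h2⟩
    · exact (hx c hcT).1 h1.symm
    · exact (hx c hcT).2 h2.symm

lemma isAcyclic_add [Fintype V] {A B : Set (Sym2 V)} (hBA : B ⊆ A)
    (hB : (fromEdgeSet B).IsAcyclic)
    (next : (fromEdgeSet A).ConnectedComponent → (fromEdgeSet A).ConnectedComponent)
    (uu vv : (fromEdgeSet A).ConnectedComponent → V) :
    ∀ (n : ℕ) (T : Set (fromEdgeSet A).ConnectedComponent), T.ncard ≤ n →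
    (∀ c ∈ T, (fromEdgeSet A).connectedComponentMk (uu c) = c) →
    (∀ c ∈ T, (fromEdgeSet A).connectedComponentMk (vv c) = next c) →
    (∀ c ∈ T, next c ≠ c) →
    (∀ T' ⊆ T, T'.Nonempty → ∃ c' ∈ T',
      (∀ c ∈ T', c ≠ c' → c ≠ c' ∧ next c ≠ c') ∨
      (∀ c ∈ T', c ≠ c' → c ≠ next c' ∧ next c ≠ next c')) →
    (fromEdgeSet (B ∪ (fun c => s(uu c, vv c)) '' T)).IsAcyclic := by
  intro n
  induction n with
  | zero =>
    intro T hcard _ _ _ _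
    have : T = ∅ := by
      rw [← Set.ncard_eq_zero (Set.toFinite T)]
      omega
    subst this
    simpa using hB
  | succ n ih =>
    intro T hcard hu hv hne hsel
    rcases Set.eq_empty_or_nonempty T with rfl | hT
    · simpa using hB
    obtain ⟨c', hc', hdisj⟩ := hsel T subset_rfl hT
    set T' := T \ {c'} with hT'
    have hsub : T' ⊆ T := Set.diff_subset
    have hcard' : T'.ncard ≤ n := by
      have h1 : T'.ncard = T.ncard - 1 := by
        rw [hT']
        exact Set.ncard_diff_singleton_of_mem hc'
      have hpos : 0 < T.ncard := Set.ncard_pos (Set.toFinite T) |>.2 hT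
      omega
    have hIH : (fromEdgeSet (B ∪ (fun c => s(uu c, vv c)) '' T')).IsAcyclic :=
      ih T' hcard' (fun c hc => hu c (hsub hc)) (fun c hc => hv c (hsub hc))
        (fun c hc => hne c (hsub hc))
        (fun T'' hsub'' hne'' => hsel T'' (hsub''.trans hsub) hne'')
    have hnuv : uu c' ≠ vv c' := by
      intro h
      apply hne c' hc'
      rw [← hv c' hc', ← h, hu c' hc']
    have hunreach : ¬ (fromEdgeSet (B ∪ (fun c => s(uu c, vv c)) '' T')).Reachable
        (uu c') (vv c') := by
      intro hr
      have hrel := reachable_proj hBA next uu vv T' (fun c hc => hu c (hsub hc))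
        (fun c hc => hv c (hsub hc)) hr
      rw [hu c' hc', hv c' hc'] at hrel
      rcases hdisj with h | h
      · have hx : ∀ c ∈ T', c ≠ c' ∧ next c ≠ c' := fun c hc => h c (hsub hc) hc.2
        exact hne c' hc' (rtg_eq_of_untouched hx hrel)
      · have hx : ∀ c ∈ T', c ≠ next c' ∧ next c ≠ next c' := fun c hc => h c (hsub hc) hc.2
        have hsymm : Symmetric (fun a b => ∃ c ∈ T', (a = c ∧ b = next c) ∨ (b = c ∧ a = next c)) := by
          rintro a b ⟨c, hc, h1 | h2⟩
          · exact ⟨c, hc, Or.inr ⟨h1.1, h1.2⟩⟩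
          · exact ⟨c, hc, Or.inl ⟨h2.1, h2.2⟩⟩
        exact (hne c' hc') ((rtg_eq_of_untouched hx ((@Relation.ReflTransGen.symmetric _ _ ⟨fun a b h => hsymm h⟩).symm _ _ hrel)).symm)
    have hTsplit : T = insert c' T' := by
      rw [hT', Set.insert_diff_singleton]
      exact (Set.insert_eq_self.2 hc').symm
    have hset : B ∪ (fun c => s(uu c, vv c)) '' T =
        (B ∪ (fun c => s(uu c, vv c)) '' T') ∪ {s(uu c', vv c')} := by
      rw [hTsplit, Set.image_insert_eq, Set.union_singleton, Set.union_insert]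
    rw [hset, fromEdgeSet_union]
    exact isAcyclic_sup_edge hIH hnuv hunreach

section Main

/-- An edge `e` of `H` is outgoing from the connected component `c` of the active
subgraph (given by the active edge set `A`) if one endpoint lies in `c` and the
other endpoint lies in a different active component. -/
def Outgoing (H : SimpleGraph V) (A : Set (Sym2 V))
    (c : (SimpleGraph.fromEdgeSet A).ConnectedComponent) (e : Sym2 V) : Prop :=
  e ∈ H.edgeSet ∧ ∃ u v : V, e = s(u, v) ∧
    (SimpleGraph.fromEdgeSet A).connectedComponentMk u = c ∧
    (SimpleGraph.fromEdgeSet A).connectedComponentMk v ≠ c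

/-- The activation process on a graph `H` with `k` vertices: initially no edges are
active; in each round every active connected component with at least one outgoing
edge activates exactly one of its outgoing edges, and afterwards an arbitrary subset
of active edges may be deleted. Then at every round the number of active edges is at
most `2k - 2`. -/
theorem activation_process_card_le [Fintype V] [Nonempty V] (H : SimpleGraph V)
    (A : ℕ → Set (Sym2 V))
    (hA0 : A 0 = ∅)
    (hAsub : ∀ t, A t ⊆ H.edgeSet)
    (hstep : ∀ t, ∃ pick : (SimpleGraph.fromEdgeSet (A t)).ConnectedComponent →
        Option (Sym2 V),
      (∀ c e, pick c = some e → Outgoing H (A t) c e) ∧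
      (∀ c, (∃ e, Outgoing H (A t) c e) → pick c ≠ none) ∧
      A (t + 1) ⊆ A t ∪ {e | ∃ c, pick c = some e}) :
    ∀ t, (A t).ncard ≤ 2 * Fintype.card V - 2 := by
  classical
  have key : ∀ t, ∃ F1 F2 : Set (Sym2 V), F1 ∪ F2 = A t ∧
      (fromEdgeSet F1).IsAcyclic ∧ (fromEdgeSet F2).IsAcyclic := by
    intro t
    induction t with
    | zero =>
      refine ⟨∅, ∅, by rw [hA0]; simp, ?_, ?_⟩ <;>
        · rw [fromEdgeSet_empty]; exact isAcyclic_bot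
    | succ t ih =>
      obtain ⟨F1, F2, hun, hac1, hac2⟩ := ih
      obtain ⟨pick, hout, -, hsub⟩ := hstep t
      have hdata : ∀ c : (fromEdgeSet (A t)).ConnectedComponent,
          ∃ uw : V × V, ∀ e, pick c = some e →
            (e = s(uw.1, uw.2) ∧ (fromEdgeSet (A t)).connectedComponentMk uw.1 = c ∧
             (fromEdgeSet (A t)).connectedComponentMk uw.2 ≠ c) := by
        intro c
        by_cases h : ∃ e, pick c = some e
        · obtain ⟨e, he⟩ := h
          obtain ⟨-, u, w, heq, hcu, hcw⟩ := hout c e he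
          refine ⟨(u, w), fun e' he' => ?_⟩
          rw [he] at he'
          injection he' with h'
          subst h'
          exact ⟨heq, hcu, hcw⟩
        · exact ⟨(Classical.arbitrary V, Classical.arbitrary V),
            fun e he => absurd ⟨e, he⟩ h⟩
      choose uw huw using hdata
      set uu := fun c => (uw c).1 with huu
      set vv := fun c => (uw c).2 with hvv
      set cm := (fromEdgeSet (A t)).connectedComponentMk with hcm
      set nextf : (fromEdgeSet (A t)).ConnectedComponent →
          (fromEdgeSet (A t)).ConnectedComponent :=
        fun c => if h : ∃ e, pick c = some e then cm (vv c) else c with hnextf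
      letI : Fintype (fromEdgeSet (A t)).ConnectedComponent := Fintype.ofFinite _
      letI : LinearOrder (fromEdgeSet (A t)).ConnectedComponent :=
        LinearOrder.lift' (fun c => (Fintype.equivFin _ c : ℕ))
          (fun a b h => (Fintype.equivFin _).injective (Fin.val_injective h))
      set D : Set (fromEdgeSet (A t)).ConnectedComponent := {c | ∃ e, pick c = some e} with hD
      have hDu : ∀ c ∈ D, cm (uu c) = c := by
        intro c hc
        obtain ⟨e, he⟩ := hc
        exact (huw c e he).2.1
      have hDv : ∀ c ∈ D, cm (vv c) = nextf c := by
        intro c hc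
        have hc' : ∃ e, pick c = some e := hc
        show cm (vv c) = if h : ∃ e, pick c = some e then cm (vv c) else c
        rw [dif_pos hc']
      have hDne : ∀ c ∈ D, nextf c ≠ c := by
        intro c hc h
        obtain ⟨e, he⟩ := hc
        exact (huw c e he).2.2 ((hDv c ⟨e, he⟩).symm ▸ h)
      set SM : Set (fromEdgeSet (A t)).ConnectedComponent :=
        {c ∈ D | IsSpec nextf c} with hSM
      set SF : Set (fromEdgeSet (A t)).ConnectedComponent :=
        {c ∈ D | ¬ IsSpec nextf c} with hSF
      have hF1A : F1 ⊆ A t := hun ▸ Set.subset_union_left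
      have hF2A : F2 ⊆ A t := hun ▸ Set.subset_union_right
      have hG1 : (fromEdgeSet (F1 ∪ (fun c => s(uu c, vv c)) '' SF)).IsAcyclic := by
        refine isAcyclic_add hF1A hac1 nextf uu vv SF.ncard SF le_rfl
          (fun c hc => hDu c hc.1) (fun c hc => hDv c hc.1) (fun c hc => hDne c hc.1) ?_
        intro T' hT' hne'
        exact selF nextf T' (fun c hc => (hT' hc).2) hne'
      have hG2 : (fromEdgeSet (F2 ∪ (fun c => s(uu c, vv c)) '' SM)).IsAcyclic := by
        refine isAcyclic_add hF2A hac2 nextf uu vv SM.ncard SM le_rfl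
          (fun c hc => hDu c hc.1) (fun c hc => hDv c hc.1) (fun c hc => hDne c hc.1) ?_
        intro T' hT' hne'
        obtain ⟨c', hc', hall⟩ := selM nextf T' (fun c hc => (hT' hc).2) hne'
        exact ⟨c', hc', Or.inl hall⟩
      have hcover : A (t + 1) ⊆
          (F1 ∪ (fun c => s(uu c, vv c)) '' SF) ∪ (F2 ∪ (fun c => s(uu c, vv c)) '' SM) := by
        intro e he
        rcases hsub he with hA | ⟨c, hc⟩
        · rw [← hun] at hA
          rcases hA with h | h
          · exact Or.inl (Or.inl h)
          · exact Or.inr (Or.inl h)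
        · have hcD : c ∈ D := ⟨e, hc⟩
          have heq : e = s(uu c, vv c) := (huw c e hc).1
          by_cases hs : IsSpec nextf c
          · exact Or.inr (Or.inr ⟨c, ⟨hcD, hs⟩, heq.symm⟩)
          · exact Or.inl (Or.inr ⟨c, ⟨hcD, hs⟩, heq.symm⟩)
      refine ⟨(F1 ∪ (fun c => s(uu c, vv c)) '' SF) ∩ A (t + 1),
        (F2 ∪ (fun c => s(uu c, vv c)) '' SM) ∩ A (t + 1), ?_, ?_, ?_⟩
      · rw [← Set.union_inter_distrib_right, Set.inter_eq_right]
        exact hcover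
      · exact isAcyclic_anti (fromEdgeSet_mono Set.inter_subset_left) hG1
      · exact isAcyclic_anti (fromEdgeSet_mono Set.inter_subset_left) hG2
  intro t
  obtain ⟨F1, F2, hun, hac1, hac2⟩ := key t
  have hF1H : F1 ⊆ H.edgeSet := fun e he => hAsub t (hun ▸ Set.subset_union_left he)
  have hF2H : F2 ⊆ H.edgeSet := fun e he => hAsub t (hun ▸ Set.subset_union_right he)
  have hcard : ∀ F : Set (Sym2 V), F ⊆ H.edgeSet → (fromEdgeSet F).IsAcyclic →
      F.ncard + 1 ≤ Fintype.card V := by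
    intro F hFH hFac
    have hE : (fromEdgeSet F).edgeSet = F := by
      rw [edgeSet_fromEdgeSet]
      ext e
      exact ⟨fun h => h.1, fun h => ⟨h, fun hd => (H.not_isDiag_of_mem_edgeSet (hFH h)) hd⟩⟩
    have := isAcyclic_ncard_le (fromEdgeSet F) hFac
    rwa [hE] at this
  have h1 := hcard F1 hF1H hac1
  have h2 := hcard F2 hF2H hac2
  have h3 : (A t).ncard ≤ F1.ncard + F2.ncard := hun ▸ Set.ncard_union_le F1 F2
  have h4 : 0 < Fintype.card V := Fintype.card_pos
  omega

end Main
end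

section
/- Let G be a graph formed from two copies H_1, H_2 of a graph with n/2 vertices and diameter λ/2 - 1 each, by adding all (n/2)² edges between H_1 and H_2. Then G has diameter at most λ - 1, and the number of edges between H_1 and H_2 is n²/4; consequently, if at most c·n links can carry messages per round, an adversary failing all attempted cross edges can prevent any message from crossing between H_1 and H_2 for at least n²/(4cn) = n/(4c) rounds. -/
open SimpleGraph

/-- The lower-bound network of Theorem 10: two copies of a connected graph `H` on
`n/2` vertices of diameter `λ/2 - 1`, joined by all `(n/2)²` possible cross edges.
The resulting graph `G` has diameter at most `λ - 1` and exactly `n²/4` cross edges;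
consequently, if at most `c·n` cross links can carry messages per round, then
exhausting all `n²/4` cross edges (the adversary failing every attempted cross edge)
requires at least `n/(4c)` rounds. -/
theorem two_blocks_diam_and_cross_edges (n l : ℕ) (hn : 0 < n) (hneven : Even n)
    (hleven : Even l) (hln : l ≤ n) (hl : 2 ≤ l)
    (H : SimpleGraph (Fin (n / 2))) (hHconn : H.Connected)
    (hHdiam : H.diam = l / 2 - 1)
    (G : SimpleGraph (Fin (n / 2) ⊕ Fin (n / 2)))
    (hG1 : ∀ a b : Fin (n / 2), G.Adj (Sum.inl a) (Sum.inl b) ↔ H.Adj a b)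
    (hG2 : ∀ a b : Fin (n / 2), G.Adj (Sum.inr a) (Sum.inr b) ↔ H.Adj a b)
    (hG3 : ∀ a b : Fin (n / 2), G.Adj (Sum.inl a) (Sum.inr b)) :
    G.diam ≤ l - 1 ∧
    {e : Sym2 (Fin (n / 2) ⊕ Fin (n / 2)) | e ∈ G.edgeSet ∧
      ∃ a b : Fin (n / 2), e = s(Sum.inl a, Sum.inr b)}.ncard = n ^ 2 / 4 ∧
    (∀ c T : ℕ, 0 < c → n ^ 2 / 4 ≤ T * (c * n) → n / (4 * c) ≤ T) := by
  obtain ⟨m, hm⟩ := hneven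
  have hmn : n / 2 = m := by omega
  have hm0 : 0 < m := by omega
  subst hm
  refine ⟨?_, ?_, ?_⟩
  · -- diameter bound
    have key : ∀ u v : Fin ((m + m) / 2) ⊕ Fin ((m + m) / 2), G.edist u v ≤ (l - 1 : ℕ) := by
      have h1 : (1 : ℕ∞) ≤ (l - 1 : ℕ) := by
        have : (1 : ℕ) ≤ l - 1 := by omega
        exact_mod_cast this
      have adist : ∀ a b, G.edist (Sum.inl a) (Sum.inr b) ≤ (l - 1 : ℕ) := fun a b =>
        le_trans (SimpleGraph.edist_le (SimpleGraph.Adj.toWalk (hG3 a b))) (by simpa using h1)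
      have same : ∀ a b : Fin ((m + m) / 2),
          G.edist (Sum.inl a) (Sum.inl b) ≤ (l - 1 : ℕ) ∧
          G.edist (Sum.inr a) (Sum.inr b) ≤ (l - 1 : ℕ) := by
        intro a b
        rcases eq_or_ne a b with rfl | hab
        · simp
        · rcases Nat.lt_or_ge l 4 with hl4 | hl4
          · -- l = 2 (l even, 2 ≤ l < 4), so H has diameter 0 and is connected;
            -- hence the vertex type is a subsingleton, contradicting a ≠ b... unless
            -- it isn't: derive a = b, contradiction with hab.
            exfalso
            have hl2 : l = 2 := by
              obtain ⟨k, hk⟩ := hleven; omega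
            have hd0 : H.diam = 0 := by rw [hHdiam, hl2]
            have hne : Nonempty (Fin ((m + m) / 2)) := ⟨a⟩
            have hfin : H.ediam ≠ ⊤ := by
              obtain ⟨u, v, huv⟩ := H.exists_edist_eq_ediam_of_finite
              rw [← huv]
              exact (SimpleGraph.edist_ne_top_iff_reachable).mpr (hHconn.preconnected u v)
            have : Subsingleton (Fin ((m + m) / 2)) := by
              rcases (SimpleGraph.diam_eq_zero).mp hd0 with h | h
              · exact absurd h hfin
              · exact h
            exact hab (Subsingleton.elim a b)
          · -- l ≥ 4: route through the other side, length 2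
            have h2 : (2 : ℕ∞) ≤ (l - 1 : ℕ) := by
              have : (2 : ℕ) ≤ l - 1 := by omega
              exact_mod_cast this
            constructor
            · let w : G.Walk (Sum.inl a) (Sum.inl b) :=
                SimpleGraph.Walk.cons (hG3 a a)
                  (SimpleGraph.Walk.cons ((hG3 b a).symm) SimpleGraph.Walk.nil)
              refine le_trans (SimpleGraph.edist_le w) ?_
              have hw : w.length = 2 := rfl
              rw [hw]; exact_mod_cast h2
            · let w : G.Walk (Sum.inr a) (Sum.inr b) :=
                SimpleGraph.Walk.cons ((hG3 a a).symm)
                  (SimpleGraph.Walk.cons (hG3 a b) SimpleGraph.Walk.nil)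
              refine le_trans (SimpleGraph.edist_le w) ?_
              have hw : w.length = 2 := rfl
              rw [hw]; exact_mod_cast h2
      rintro (a | a) (b | b)
      · exact (same a b).1
      · exact adist a b
      · rw [SimpleGraph.edist_comm]; exact adist b a
      · exact (same a b).2
    have hed : G.ediam ≤ (l - 1 : ℕ) := SimpleGraph.ediam_le_of_edist_le key
    have := ENat.toNat_le_toNat hed (ENat.coe_ne_top _)
    rw [ENat.toNat_coe] at this; exact this
  · -- cross edge count
    set f : Fin ((m + m) / 2) × Fin ((m + m) / 2) → Sym2 (Fin ((m + m) / 2) ⊕ Fin ((m + m) / 2)) :=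
      fun p => s(Sum.inl p.1, Sum.inr p.2) with hf
    have hinj : Function.Injective f := by
      rintro ⟨a, b⟩ ⟨a', b'⟩ h
      simp only [hf, Sym2.eq_iff] at h
      rcases h with ⟨h1, h2⟩ | ⟨h1, h2⟩
      · simp_all
      · exact absurd h1 (by simp)
    have hset : {e : Sym2 (Fin ((m + m) / 2) ⊕ Fin ((m + m) / 2)) | e ∈ G.edgeSet ∧
        ∃ a b, e = s(Sum.inl a, Sum.inr b)} = f '' Set.univ := by
      ext e
      simp only [Set.mem_setOf_eq, Set.image_univ, Set.mem_range, hf, Prod.exists]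
      constructor
      · rintro ⟨_, a, b, rfl⟩; exact ⟨a, b, rfl⟩
      · rintro ⟨a, b, rfl⟩
        exact ⟨(SimpleGraph.mem_edgeSet G).mpr (hG3 a b), a, b, rfl⟩
    rw [hset, Set.ncard_image_of_injective _ hinj, Set.ncard_univ]
    have : Nat.card (Fin ((m + m) / 2) × Fin ((m + m) / 2)) = m * m := by
      simp [Nat.card_eq_fintype_card, hmn]
    rw [this]
    have h4 : (m + m) ^ 2 = (m * m) * 4 := by ring
    omega
  · -- counting rounds
    intro c T hc hT
    have hsq : (m + m) ^ 2 / 4 = m * m := by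
      have h4 : (m + m) ^ 2 = (m * m) * 4 := by ring
      omega
    rw [hsq] at hT
    -- m * m ≤ T * (c * (m+m)) = (T * c * 2) * m, so m ≤ T * c * 2
    have hm' : m ≤ T * c * 2 := by
      have h2 : m * m ≤ (T * c * 2) * m := by nlinarith
      exact Nat.le_of_mul_le_mul_right h2 hm0
    have : (m + m) / (4 * c) ≤ T * c * 2 * 2 / (4 * c) :=
      Nat.div_le_div_right (by omega)
    refine le_trans this ?_
    have h4c : 0 < 4 * c := by omega
    have heq : T * c * 2 * 2 = T * (4 * c) := by ring
    rw [heq, Nat.mul_div_assoc T (dvd_refl (4 * c)), Nat.div_self h4c, mul_one]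
end
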